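/- arXiv:adap-org/9709003 — 5 statements merged into one kernel-verified Lean document; each statement's English description precedes it below -/
import Mathlib

section
/- The modified traffic rule conserves the number of ones (cars): for any configuration x : ZMod N → Fin 2, the number of sites in state one after applying the rule equals the number of sites in state one before. -/
open Finset

/-- Number of sites in state one (cars) in a configuration. -/
def onesCount {N : ℕ} [NeZero N] (x : ZMod N → Fin 2) : ℕ :=
  (Finset.univ.filter (fun i => x i = 1)).card

/-- Number of ones in the window of `q` consecutive sites starting at `i`. -/
def wcount (q : ℕ) {N : ℕ} (x : ZMod N → Fin 2) (i : ZMod N) : ℕ :=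
  ((Finset.range q).filter (fun j : ℕ => x (i + (j : ZMod N)) = 1)).card

/-- Moving condition of the modified traffic rule: the car at `i` may move right iff
site `i+1` is empty and at most `p-1` of the `q-1` sites `i+1, …, i+q-1` are occupied. -/
abbrev canMove (p q : ℕ) {N : ℕ} (x : ZMod N → Fin 2) (i : ZMod N) : Prop :=
  x (i + 1) = 0 ∧
    ((Finset.range (q - 1)).filter (fun j : ℕ => x (i + 1 + (j : ZMod N)) = 1)).card ≤ p - 1

/-- One parallel update of the modified traffic rule. -/
def traffic (p q : ℕ) {N : ℕ} (x : ZMod N → Fin 2) : ZMod N → Fin 2 :=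
  fun i =>
    if (x i = 1 ∧ ¬ canMove p q x i) ∨ (x (i - 1) = 1 ∧ canMove p q x (i - 1)) then 1 else 0

/-- Number of ones among the `2q+1` sites `i-q, …, i+q`. -/
def nbhdCount (q : ℕ) {N : ℕ} (x : ZMod N → Fin 2) (i : ZMod N) : ℕ :=
  ((Finset.range (2 * q + 1)).filter (fun j : ℕ => x (i - (q : ZMod N) + (j : ZMod N)) = 1)).card

/-- One parallel update of the modified majority rule. -/
def majority (p q : ℕ) {N : ℕ} (x : ZMod N → Fin 2) : ZMod N → Fin 2 :=
  fun i => if 2 * p + 1 ≤ nbhdCount q x i then 1 else 0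

/-! A car only moves into an empty site, so after one step the occupied set is the disjoint
union of the cars that stay and the translate by one of the cars that move. -/

theorem card_sdiff_union_map {α : Type*} [DecidableEq α] {S M : Finset α} (f : α ↪ α)
    (hMS : M ⊆ S) (hdisj : Disjoint (M.map f) S) :
    #((S \ M) ∪ M.map f) = #S := by
  have hdisj' : Disjoint (S \ M) (M.map f) :=
    hdisj.symm.mono_left sdiff_subset
  rw [card_union_of_disjoint hdisj', card_sdiff_of_subset hMS, card_map]
  have := card_le_card hMS
  omega

namespace Traffic

variable (p q : ℕ) {N : ℕ} [NeZero N] (x : ZMod N → Fin 2)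

def occupied : Finset (ZMod N) := univ.filter (x · = 1)

def movers : Finset (ZMod N) := (occupied x).filter (canMove p q x)

theorem movers_subset_occupied : movers p q x ⊆ occupied x := filter_subset _ _

theorem disjoint_map_movers_occupied :
    Disjoint ((movers p q x).map (Equiv.addRight 1).toEmbedding) (occupied x) := by
  rw [disjoint_left]
  intro i hi hocc
  obtain ⟨j, hj, rfl⟩ := mem_map.mp hi
  have hfree : x (j + 1) = 0 := (mem_filter.mp hj).2.1
  have hcar : x (j + 1) = 1 := (mem_filter.mp hocc).2
  simp [hfree] at hcar

theorem occupied_traffic :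
    occupied (traffic p q x) =
      (occupied x \ movers p q x) ∪ (movers p q x).map (Equiv.addRight 1).toEmbedding := by
  ext i
  simp only [occupied, movers, mem_union, mem_sdiff, mem_filter, mem_univ, true_and,
    mem_map_equiv, Equiv.addRight_symm, Equiv.coe_addRight, ← sub_eq_add_neg]
  unfold traffic
  split_ifs <;> simp only [Fin.isValue, true_iff, zero_ne_one, false_iff] <;> tauto

end Traffic

theorem traffic_conserves_ones_general {N : ℕ} [NeZero N] (p q : ℕ)
    (x : ZMod N → Fin 2) :
    onesCount (traffic p q x) = onesCount x :=
  (congrArg card (Traffic.occupied_traffic p q x)).trans <|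
    card_sdiff_union_map _ (Traffic.movers_subset_occupied p q x)
      (Traffic.disjoint_map_movers_occupied p q x)

/-- the modified traffic rule conserves the number of cars. -/
theorem traffic_conserves_ones {N : ℕ} [NeZero N] (p q : ℕ) (hp : 0 < p) (hpq : p < q)
    (hco : Nat.Coprime p q) (x : ZMod N → Fin 2) :
    onesCount (traffic p q x) = onesCount x :=
  traffic_conserves_ones_general p q x
end

section
/- Any configuration in which every window of q consecutive sites contains exactly p ones is a fixed point of the modified majority rule. -/
open Finset

lemma nbhdCount_eq_wcount_add_wcount (q : ℕ) {N : ℕ} (x : ZMod N → Fin 2) (i : ZMod N) :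
    nbhdCount q x i
      = wcount q x (i - q) + (if x i = 1 then 1 else 0) + wcount q x (i + 1) := by
  simp only [nbhdCount, wcount, card_filter]
  rw [show 2 * q + 1 = q + 1 + q by ring, sum_range_add, sum_range_add, sum_range_one]
  congr 2
  · rw [add_zero, sub_add_cancel]
  · funext j
    rw [show i - q + ((q + 1 + j : ℕ) : ZMod N) = i + 1 + j by push_cast; ring]

theorem majority_fixed_of_exact_windows_general {N : ℕ} (p q : ℕ)
    (x : ZMod N → Fin 2) (hw : ∀ i, wcount q x i = p) :
    majority p q x = x := by
  funext i
  have hcount : nbhdCount q x i = 2 * p + (if x i = 1 then 1 else 0) := by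
    rw [nbhdCount_eq_wcount_add_wcount, hw, hw]; ring
  obtain hxi | hxi : x i = 0 ∨ x i = 1 := by omega
  all_goals simp [majority, hcount, hxi]

/-- a configuration whose every `q`-window contains exactly `p` ones
is a fixed point of the modified majority rule. -/
theorem majority_fixed_of_exact_windows {N : ℕ} [NeZero N] (p q : ℕ) (hp : 0 < p)
    (hpq : p < q) (hco : Nat.Coprime p q) (hdvd : q ∣ N) (hN : 2 * q + 1 ≤ N)
    (x : ZMod N → Fin 2) (hw : ∀ i, wcount q x i = p) :
    majority p q x = x :=
  majority_fixed_of_exact_windows_general p q x hw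
end

section
/- For the classical case p = 1, q = 2 on a ring of N sites: if the number of ones is strictly less than N/2, then after applying rule 184 ⌊(N−2)/2⌋ times, no two consecutive sites are both in state 1 (every 2-window contains at most one 1). -/
open Finset

/-- Wolfram's elementary CA rule 184. -/
def rule184 {N : ℕ} (x : ZMod N → Fin 2) : ZMod N → Fin 2 :=
  fun i => if (x (i - 1) = 1 ∧ x i = 0) ∨ (x i = 1 ∧ x (i + 1) = 1) then 1 else 0

def Jam {N : ℕ} (x : ZMod N → Fin 2) (i : ZMod N) : Prop := x i = 1 ∧ x (i + 1) = 1

lemma fin2cases (a : Fin 2) : a = 0 ∨ a = 1 := by omega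

lemma rule184_one {N : ℕ} (x : ZMod N → Fin 2) (i : ZMod N) :
    rule184 x i = 1 ↔ ((x (i - 1) = 1 ∧ x i = 0) ∨ (x i = 1 ∧ x (i + 1) = 1)) := by
  unfold rule184
  split <;> simp_all

lemma jam_back_one {N : ℕ} (x : ZMod N → Fin 2) (i : ZMod N) (h : Jam (rule184 x) i) :
    Jam x (i + 1) ∧ (x i = 1 ∨ x (i - 1) = 1) := by
  obtain ⟨h1, h2⟩ := h
  rw [rule184_one] at h1 h2
  rw [add_sub_cancel_right] at h2
  rcases h2 with ⟨hx, hx1⟩ | ⟨hx1, hx2⟩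
  · rcases h1 with ⟨_, h0⟩ | ⟨_, h0⟩ <;> simp_all
  · refine ⟨⟨hx1, hx2⟩, ?_⟩
    rcases h1 with ⟨h0, _⟩ | ⟨h0, _⟩
    · exact Or.inr h0
    · exact Or.inl h0

lemma step_count {N : ℕ} (x : ZMod N → Fin 2) (a : ZMod N) (m : ℕ) :
    ((range m).filter (fun j : ℕ => rule184 x (a + (j : ZMod N)) = 1)).card ≤
    ((range (m + 1)).filter (fun j : ℕ => x (a - 1 + (j : ZMod N)) = 1)).card := by
  refine card_le_card_of_injOn (fun j => if x (a + (j : ZMod N)) = 1 then j + 1 else j) ?_ ?_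
  · intro j hj
    simp only [mem_coe, mem_filter, mem_range] at hj ⊢
    obtain ⟨hjm, hy⟩ := hj
    rw [rule184_one] at hy
    by_cases hc : x (a + (j : ZMod N)) = 1
    · rw [if_pos hc]
      refine ⟨by omega, ?_⟩
      have : a - 1 + ((j + 1 : ℕ) : ZMod N) = a + (j : ZMod N) := by push_cast; ring
      rw [this]; exact hc
    · rw [if_neg hc]
      refine ⟨by omega, ?_⟩
      rcases hy with ⟨h0, _⟩ | ⟨h0, _⟩
      · have : a - 1 + (j : ZMod N) = a + (j : ZMod N) - 1 := by ring
        rw [this]; exact h0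
      · exact absurd h0 hc
  · intro j1 h1 j2 h2 he
    simp only [mem_coe, mem_filter, mem_range] at h1 h2
    by_cases hc1 : x (a + (j1 : ZMod N)) = 1 <;> by_cases hc2 : x (a + (j2 : ZMod N)) = 1 <;>
      simp only [hc1, hc2, if_pos, if_neg, if_true, if_false] at he
    · omega
    · -- j1 + 1 = j2, x(a+j1)=1, x(a+j2)≠1 ; but rule184 x (a+j1)=1 and x(a+j1)=1 force x(a+j1+1)=1
      exfalso
      have hy := h1.2
      rw [rule184_one] at hy
      rcases hy with ⟨_, h0⟩ | ⟨_, h0⟩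
      · simp_all
      · apply hc2
        rw [← he]
        have : ((j1 + 1 : ℕ) : ZMod N) = (j1 : ZMod N) + 1 := by push_cast; ring
        rw [this, ← add_assoc]
        exact h0
    · exfalso
      have hy := h2.2
      rw [rule184_one] at hy
      rcases hy with ⟨_, h0⟩ | ⟨_, h0⟩
      · simp_all
      · apply hc1
        rw [he]
        have : ((j2 + 1 : ℕ) : ZMod N) = (j2 : ZMod N) + 1 := by push_cast; ring
        rw [this, ← add_assoc]
        exact h0
    · exact he

lemma jam_prop {N : ℕ} (x : ZMod N → Fin 2) (t : ℕ) (i : ZMod N)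
    (h : Jam (rule184^[t] x) i) : Jam x (i + (t : ZMod N)) := by
  induction t generalizing x i with
  | zero => simpa using h
  | succ t ih =>
    rw [Function.iterate_succ_apply] at h
    have h2 := (jam_back_one x _ (ih (rule184 x) i h)).1
    have : i + ((t + 1 : ℕ) : ZMod N) = i + (t : ZMod N) + 1 := by push_cast; ring
    rw [this]; exact h2

lemma main_count {N : ℕ} (x : ZMod N → Fin 2) (t : ℕ) (i : ZMod N)
    (h : Jam (rule184^[t] x) i) :
    t + 2 ≤ ((range (2 * t + 2)).filter
      (fun j : ℕ => x (i - (t : ZMod N) + (j : ZMod N)) = 1)).card := by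
  induction t generalizing x i with
  | zero =>
    have h0 : (0 : ℕ) ∈ (range 2).filter
        (fun j : ℕ => x (i - ((0:ℕ) : ZMod N) + (j : ZMod N)) = 1) := by
      simp only [mem_filter, mem_range]
      refine ⟨by omega, ?_⟩
      simpa using h.1
    have h1 : (1 : ℕ) ∈ (range 2).filter
        (fun j : ℕ => x (i - ((0:ℕ) : ZMod N) + (j : ZMod N)) = 1) := by
      simp only [mem_filter, mem_range]
      refine ⟨by omega, ?_⟩
      simpa using h.2
    calc (0:ℕ) + 2 = ({0, 1} : Finset ℕ).card := by simp
    _ ≤ _ := by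
      apply card_le_card
      intro j hj
      simp only [mem_insert, mem_singleton] at hj
      rcases hj with rfl | rfl <;> assumption
  | succ t ih =>
    have hjam0 : Jam x (i + ((t + 1 : ℕ) : ZMod N)) := jam_prop x (t + 1) i h
    rw [Function.iterate_succ_apply] at h
    have h1 := ih (rule184 x) i h
    have h2 := step_count x (i - (t : ZMod N)) (2 * t + 2)
    set a : ZMod N := i - ((t + 1 : ℕ) : ZMod N) with ha
    have hae : i - (t : ZMod N) - 1 = a := by rw [ha]; push_cast; ring
    rw [hae] at h2
    have h3 : t + 2 ≤ ((range (2 * t + 3)).filter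
        (fun j : ℕ => x (a + (j : ZMod N)) = 1)).card := le_trans h1 h2
    set S := (range (2 * (t + 1) + 2)).filter (fun j : ℕ => x (a + (j : ZMod N)) = 1) with hS
    have hmem : 2 * t + 3 ∈ S := by
      rw [hS]
      simp only [mem_filter, mem_range]
      refine ⟨by omega, ?_⟩
      have : a + ((2 * t + 3 : ℕ) : ZMod N) = i + ((t + 1 : ℕ) : ZMod N) + 1 := by
        rw [ha]; push_cast; ring
      rw [this]; exact hjam0.2
    have hsub : (range (2 * t + 3)).filter (fun j : ℕ => x (a + (j : ZMod N)) = 1)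
        ⊆ S.erase (2 * t + 3) := by
      intro j hj
      simp only [mem_filter, mem_range] at hj
      rw [mem_erase]
      refine ⟨by omega, ?_⟩
      rw [hS]; simp only [mem_filter, mem_range]; exact ⟨by omega, hj.2⟩
    have := card_le_card hsub
    have := card_erase_of_mem hmem
    have hSpos : 1 ≤ S.card := card_pos.mpr ⟨_, hmem⟩
    omega

/-- if strictly fewer than half the sites are cars, `⌊(N-2)/2⌋`
iterations of rule 184 leave no two consecutive ones. -/
theorem rule184_iter_no_consecutive_ones {N : ℕ} [NeZero N] (hN : 3 ≤ N)
    (x : ZMod N → Fin 2) (hρ : onesCount x * 2 < N) :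
    ∀ i, wcount 2 (rule184^[(N - 2) / 2] x) i ≤ 1 := by
  intro i
  by_contra hcon
  push_neg at hcon
  set t := (N - 2) / 2 with ht
  set y := rule184^[t] x with hy
  -- extract the jam
  have hjam : Jam y i := by
    have hsub : (range 2).filter (fun j : ℕ => y (i + (j : ZMod N)) = 1) ⊆ range 2 :=
      filter_subset _ _
    have heq : (range 2).filter (fun j : ℕ => y (i + (j : ZMod N)) = 1) = range 2 := by
      apply eq_of_subset_of_card_le hsub
      simp [wcount] at hcon ⊢; omega
    constructor
    · have : (0 : ℕ) ∈ (range 2).filter (fun j : ℕ => y (i + (j : ZMod N)) = 1) := by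
        rw [heq]; simp
      simpa using (mem_filter.1 this).2
    · have : (1 : ℕ) ∈ (range 2).filter (fun j : ℕ => y (i + (j : ZMod N)) = 1) := by
        rw [heq]; simp
      simpa using (mem_filter.1 this).2
  have hcount := main_count x t i hjam
  have hwin : ((range (2 * t + 2)).filter
      (fun j : ℕ => x (i - (t : ZMod N) + (j : ZMod N)) = 1)).card ≤ onesCount x := by
    refine card_le_card_of_injOn (fun j : ℕ => i - (t : ZMod N) + (j : ZMod N)) ?_ ?_
    · intro j hj
      simp only [mem_coe, mem_filter, mem_range] at hj
      simp only [onesCount, mem_coe, mem_filter, mem_univ, true_and]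
      exact hj.2
    · intro j1 h1 j2 h2 he
      simp only [mem_coe, mem_filter, mem_range] at h1 h2
      have hcast : (j1 : ZMod N) = (j2 : ZMod N) := by
        have := add_left_cancel he
        exact this
      have hlt : 2 * t + 2 ≤ N := by omega
      have v1 : ((j1 : ZMod N)).val = j1 := ZMod.val_natCast_of_lt (by omega)
      have v2 : ((j2 : ZMod N)).val = j2 := ZMod.val_natCast_of_lt (by omega)
      rw [← v1, ← v2, hcast]
  omega
end

section
/- For the classical case p = 1, q = 2: if no two consecutive sites are both 1 and the number of ones is strictly less than N/2, then applying rule 232 (majority over the 3-site neighborhood) ⌈N/2⌉ times yields the all-zeros configuration. -/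
open Finset

/-- Wolfram's elementary CA rule 232 (three-site majority rule). -/
def rule232 {N : ℕ} (x : ZMod N → Fin 2) : ZMod N → Fin 2 :=
  fun i => if 2 ≤ ((Finset.range 3).filter (fun j : ℕ => x (i - 1 + (j : ZMod N)) = 1)).card
    then 1 else 0

/-! Without adjacent ones, rule 232 can only produce a one at `i` from ones at both neighbours
`i ± 1`, and it creates no adjacent ones. Hence a one at `i` after `k` steps forces ones of `x` at
`i - k, i - k + 2, …, i + k`. For `k = ⌈N/2⌉` these include `⌈N/2⌉` distinct sites, more than
`x` has ones. -/

def NoAdjacentOnes {N : ℕ} (x : ZMod N → Fin 2) : Prop :=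
  ∀ i, x i = 1 → x (i + 1) = 0

namespace NoAdjacentOnes

variable {N : ℕ} {x : ZMod N → Fin 2}

theorem rule232_eq_one (hx : NoAdjacentOnes x) {i : ZMod N} (h : rule232 x i = 1) :
    x (i - 1) = 1 ∧ x (i + 1) = 1 := by
  have hl := hx (i - 1)
  have hr := hx i
  rw [sub_add_cancel] at hl
  simp only [rule232, show Finset.range 3 = {0, 1, 2} from rfl, filter_insert, filter_singleton,
    Nat.cast_zero, Nat.cast_one, Nat.cast_ofNat, add_zero, sub_add_cancel,
    show i - 1 + 2 = i + 1 by ring] at h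
  revert hl hr h
  generalize x (i - 1) = a
  generalize x i = b
  generalize x (i + 1) = c
  revert a b c
  decide

theorem map_rule232 (hx : NoAdjacentOnes x) : NoAdjacentOnes (rule232 x) := by
  intro i hi
  by_contra hi'
  have h₁ := hx.rule232_eq_one hi
  have h₂ := hx.rule232_eq_one (Fin.eq_one_of_ne_zero _ hi')
  rw [add_sub_cancel_right] at h₂
  simp [hx i h₂.1] at h₁

theorem eq_one_of_iterate_rule232_eq_one (hx : NoAdjacentOnes x) {k : ℕ} {i : ZMod N}
    (h : rule232^[k] x i = 1) : ∀ j ≤ k, x (i - k + 2 * j) = 1 := by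
  induction k generalizing x with
  | zero => simpa using h
  | succ k ih =>
    rw [Function.iterate_succ_apply] at h
    have hprev := fun j hj => hx.rule232_eq_one (ih hx.map_rule232 h j hj)
    rintro (_ | j) hj
    · convert (hprev 0 k.zero_le).1 using 2
      push_cast; ring
    · convert (hprev j (by omega)).2 using 2
      push_cast; ring

end NoAdjacentOnes

theorem le_onesCount_of_forall_eq_one {N : ℕ} [NeZero N] {x : ZMod N → Fin 2} {m : ℕ}
    (hm : 2 * m ≤ N + 1) (a : ZMod N) (h : ∀ j < m, x (a + 2 * j) = 1) : m ≤ onesCount x := by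
  have hinj : Set.InjOn (fun j : ℕ => a + 2 * (j : ZMod N)) (range m) := by
    intro j hj j' hj' hjj'
    simp only [coe_range, Set.mem_Iio] at hj hj'
    have hcast : ((2 * j : ℕ) : ZMod N) = ((2 * j' : ℕ) : ZMod N) := by
      push_cast; exact add_left_cancel hjj'
    rw [ZMod.natCast_eq_natCast_iff', Nat.mod_eq_of_lt (by omega),
      Nat.mod_eq_of_lt (by omega)] at hcast
    omega
  have hmaps : Set.MapsTo (fun j : ℕ => a + 2 * (j : ZMod N)) (range m) (univ.filter (x · = 1)) :=
    fun j hj => by simpa using h j (by simpa using hj)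
  simpa [onesCount] using card_le_card_of_injOn _ hmaps hinj

theorem rule232_iter_all_zeros_general {N : ℕ} [NeZero N] (x : ZMod N → Fin 2)
    (hsep : ∀ i, x i = 1 → x (i + 1) = 0) (hρ : onesCount x * 2 < N) :
    rule232^[(N + 1) / 2] x = fun _ => 0 := by
  funext i
  by_contra hi
  have hprog := NoAdjacentOnes.eq_one_of_iterate_rule232_eq_one hsep (Fin.eq_one_of_ne_zero _ hi)
  have hcount := le_onesCount_of_forall_eq_one (m := (N + 1) / 2) (by omega) _
    fun j hj => hprog j hj.le
  omega

/-- if no two consecutive sites are both 1 and fewer than half the sites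
are 1, then `⌈N/2⌉` iterations of rule 232 yield the all-zeros configuration. -/
theorem rule232_iter_all_zeros {N : ℕ} [NeZero N] (hN : 3 ≤ N) (x : ZMod N → Fin 2)
    (hsep : ∀ i, x i = 1 → x (i + 1) = 0) (hρ : onesCount x * 2 < N) :
    rule232^[(N + 1) / 2] x = fun _ => 0 :=
  rule232_iter_all_zeros_general x hsep hρ
end

section
/- Under the modified traffic rule, a car initially located at a site whose local car density is at most p/q will, in the co-moving frame, never be at a site whose local car density exceeds (p+1)/q at any later time. -/
open Finset

/-- The position at time `t` of the car initially at site `i`, tracked through the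
modified traffic rule dynamics (the car moves one step right exactly when its moving
condition holds). -/
def carPos (p q : ℕ) {N : ℕ} (x : ZMod N → Fin 2) (i : ZMod N) : ℕ → ZMod N
  | 0 => i
  | t + 1 =>
      let y := (traffic p q)^[t] x
      let c := carPos p q x i t
      if y c = 1 ∧ canMove p q y c then c + 1 else c

/-- Indicator of a moving car at site `k`. -/
def mvInd (p q : ℕ) {N : ℕ} (y : ZMod N → Fin 2) (k : ZMod N) : ℕ :=
  if y k = 1 ∧ canMove p q y k then 1 else 0

lemma canMove_next_zero {p q N : ℕ} {y : ZMod N → Fin 2} {k : ZMod N}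
    (h : canMove p q y k) : y (k + 1) = 0 := h.1

lemma traffic_pointwise (p q : ℕ) {N : ℕ} (y : ZMod N → Fin 2) (j : ZMod N) :
    (if traffic p q y j = 1 then 1 else 0) + mvInd p q y j
      = (if y j = 1 then 1 else 0) + mvInd p q y (j - 1) := by
  have key : canMove p q y (j - 1) → y j = 0 := by
    intro h
    have := h.1
    rwa [sub_add_cancel] at this
  by_cases hB : y (j - 1) = 1 ∧ canMove p q y (j - 1)
  · have hyj : ¬ y j = 1 := by rw [key hB.2]; decide
    have hcond : #(filter (fun j1 : ℕ => y (j + (j1 : ZMod N)) = 1) (range (q - 1))) ≤ p - 1 := by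
      simpa [sub_add_cancel] using hB.2.2
    simp [traffic, mvInd, hB, hyj, hB.2, key hB.2, sub_add_cancel, hcond]
  · by_cases h1 : y j = 1 <;> by_cases h2 : canMove p q y j <;>
      simp [traffic, mvInd, hB, h1, h2]

lemma wcount_eq_sum (q : ℕ) {N : ℕ} (y : ZMod N → Fin 2) (a : ZMod N) :
    wcount q y a = ∑ j ∈ Finset.range q, (if y (a + (j : ZMod N)) = 1 then 1 else 0) := by
  rw [wcount, Finset.card_filter]

lemma telescope {N : ℕ} (g : ZMod N → ℕ) (m : ℕ) (a : ZMod N) :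
    ∑ j ∈ Finset.range (m + 1), g (a + (j : ZMod N) - 1) + g (a + (m : ZMod N))
      = ∑ j ∈ Finset.range (m + 1), g (a + (j : ZMod N)) + g (a - 1) := by
  rw [Finset.sum_range_succ', Finset.sum_range_succ]
  have h1 : ∀ j : ℕ, a + ((j + 1 : ℕ) : ZMod N) - 1 = a + (j : ZMod N) := by
    intro j; push_cast; ring
  simp only [h1, Nat.cast_zero, add_zero]
  ring

lemma wcount_traffic (p q : ℕ) {N : ℕ} (hq : 0 < q) (y : ZMod N → Fin 2) (a : ZMod N) :
    wcount q (traffic p q y) a + mvInd p q y (a + ((q - 1 : ℕ) : ZMod N))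
      = wcount q y a + mvInd p q y (a - 1) := by
  obtain ⟨m, rfl⟩ : ∃ m, q = m + 1 := ⟨q - 1, (Nat.succ_pred_eq_of_pos hq).symm⟩
  have hpt : ∑ j ∈ Finset.range (m + 1),
        ((if traffic p (m + 1) y (a + (j : ZMod N)) = 1 then 1 else 0)
          + mvInd p (m + 1) y (a + (j : ZMod N)))
      = ∑ j ∈ Finset.range (m + 1),
        ((if y (a + (j : ZMod N)) = 1 then 1 else 0)
          + mvInd p (m + 1) y (a + (j : ZMod N) - 1)) := by
    refine Finset.sum_congr rfl fun j _ => ?_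
    exact traffic_pointwise p (m + 1) y (a + (j : ZMod N))
  rw [Finset.sum_add_distrib, Finset.sum_add_distrib] at hpt
  have htel := telescope (mvInd p (m + 1) y) m a
  rw [wcount_eq_sum, wcount_eq_sum]
  have hcast : ((m + 1 - 1 : ℕ) : ZMod N) = (m : ℕ) := by norm_num
  rw [hcast]
  omega

/-- a car starting at a site of local density at most `p/q` never sits,
in the co-moving frame, at a site of local density exceeding `(p+1)/q`. -/
theorem car_density_bound {N : ℕ} [NeZero N] (p q : ℕ) (hp : 0 < p) (hpq : p < q)
    (hco : Nat.Coprime p q) (hN : q + 1 ≤ N) (x : ZMod N → Fin 2) (i : ZMod N)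
    (hcar : x i = 1) (hw : wcount q x i ≤ p) :
    ∀ t : ℕ, wcount q ((traffic p q)^[t] x) (carPos p q x i t) ≤ p + 1 := by
  have hq : 0 < q := lt_trans hp hpq
  have key : ∀ t, ((traffic p q)^[t] x) (carPos p q x i t) = 1 ∧
      wcount q ((traffic p q)^[t] x) (carPos p q x i t) ≤ p + 1 := by
    intro t
    induction t with
    | zero =>
      refine ⟨by simpa [carPos] using hcar, ?_⟩
      simpa [carPos] using le_trans hw (Nat.le_succ p)
    | succ t ih =>
      obtain ⟨hc1, hc2⟩ := ih
      set y := (traffic p q)^[t] x with hy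
      set c := carPos p q x i t with hc
      have hit : (traffic p q)^[t + 1] x = traffic p q y :=
        Function.iterate_succ_apply' (traffic p q) t x
      by_cases hmv : canMove p q y c
      · -- the car moves to `c + 1`
        have hpos : carPos p q x i (t + 1) = c + 1 := by
          rw [carPos]
          simp only [← hy, ← hc]
          rw [if_pos ⟨hc1, hmv⟩]
        have hcar' : traffic p q y (c + 1) = 1 := by
          unfold traffic
          rw [if_pos]
          exact Or.inr ⟨by rwa [add_sub_cancel_right], by rwa [add_sub_cancel_right]⟩
        have hstep := wcount_traffic p q hq y (c + 1)
        have hM : mvInd p q y (c + 1 - 1) = 1 := by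
          rw [add_sub_cancel_right, mvInd, if_pos ⟨hc1, hmv⟩]
        rw [hM] at hstep
        -- bound `wcount q y (c+1)` using the moving condition
        have hwb : wcount q y (c + 1) ≤ p := by
          obtain ⟨m, hm⟩ : ∃ m, q = m + 1 := ⟨q - 1, (Nat.succ_pred_eq_of_pos hq).symm⟩
          have hsplit : wcount q y (c + 1)
              = (∑ j ∈ Finset.range m, (if y (c + 1 + (j : ZMod N)) = 1 then 1 else 0))
                + (if y (c + 1 + (m : ZMod N)) = 1 then 1 else 0) := by
            rw [wcount_eq_sum, hm, Finset.sum_range_succ]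
          have hfirst : (∑ j ∈ Finset.range m,
              (if y (c + 1 + (j : ZMod N)) = 1 then 1 else 0)) ≤ p - 1 := by
            have := hmv.2
            rw [Finset.card_filter] at this
            have hm' : q - 1 = m := by omega
            rwa [hm'] at this
          have hlast : (if y (c + 1 + (m : ZMod N)) = 1 then 1 else 0) ≤ 1 := by
            split <;> omega
          omega
        rw [hit, hpos]
        omega
      · -- the car stays at `c`
        have hpos : carPos p q x i (t + 1) = c := by
          rw [carPos]
          simp only [← hy, ← hc]
          rw [if_neg (fun h => hmv h.2)]
        have hcar' : traffic p q y c = 1 := by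
          unfold traffic
          rw [if_pos (Or.inl ⟨hc1, hmv⟩)]
        have hstep := wcount_traffic p q hq y c
        have hM : mvInd p q y (c - 1) = 0 := by
          rw [mvInd, if_neg]
          rintro ⟨-, h⟩
          have := h.1
          rw [sub_add_cancel, hc1] at this
          exact absurd this (by decide)
        rw [hM] at hstep
        rw [hit, hpos]
        omega
  intro t
  exact (key t).2
end
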